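/- Let d ∈ ℕ and f ∈ L¹([0,1]^d). Then for every k̄ ∈ ℤ^d the half-period cosine coefficient of f at |k̄| and the k̄-th Fourier coefficient of the periodization 𝒫f are related by ∫_{[0,1]^d} f(x) c_{|k̄|}(x) dx = 2^{(|k̄|₀ - d)/2} · 2^{-d/2} ∫_{[-1,1]^d} (𝒫f)(x) e^{-iπ k̄·x} dx, where |k̄|₀ is the number of nonzero entries of k̄ and |k̄| = (|k₁|,…,|k_d|). -/

import Mathlib

open MeasureTheory Set

/-- Univariate half-period cosine functions: `c₀ ≡ 1`, `c_k(x) = √2 cos(πkx)` for `k ≥ 1`. -/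
noncomputable def hpcFun (k : ℕ) (x : ℝ) : ℝ :=
  if k = 0 then 1 else Real.sqrt 2 * Real.cos (Real.pi * (k : ℝ) * x)

/-- Tensorized half-period cosine functions `c_k̄`. -/
noncomputable def hpc (d : ℕ) (k : Fin d → ℕ) (x : Fin d → ℝ) : ℝ :=
  ∏ i, hpcFun (k i) (x i)

/-- `|k̄|₀`: the number of nonzero entries of the multi-index `k̄`. -/
def nzCount (d : ℕ) (k : Fin d → ℤ) : ℕ :=
  (Finset.univ.filter fun i => k i ≠ 0).card

/-!
Cut `[-1,1]^d` into the `2^d` reflections `ε • [0,1]^d`, `ε ∈ {±1}^d`, of the unit cube, which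
overlap only in null sets. Each sign flip preserves volume and fixes `𝒫f` on `[0,1]^d`, so the
Fourier coefficient of `𝒫f` becomes `∫_{[0,1]^d} f(x) ∑_ε e^{-iπ k̄·(εx)} dx`, and the inner sum
factors as `∏ᵢ 2 cos(π kᵢ xᵢ)`. Each factor is `2^{1/2}` or `2` (for `kᵢ = 0`) times
`c_{|kᵢ|}(xᵢ)`, which gives the constant.
-/

open scoped Real

section Reflection

variable {ι : Type*}

noncomputable def coordReflection (ε : ι → Bool) : (ι → ℝ) ≃ᵐ (ι → ℝ) :=
  MeasurableEquiv.piCongrRight fun i =>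
    if ε i then MeasurableEquiv.refl ℝ else MeasurableEquiv.neg ℝ

lemma coordReflection_apply (ε : ι → Bool) (x : ι → ℝ) (i : ι) :
    coordReflection ε x i = if ε i then x i else -x i := by
  by_cases h : ε i <;> simp [coordReflection, MeasurableEquiv.piCongrRight, h]

lemma coordReflection_coordReflection (ε : ι → Bool) (x : ι → ℝ) :
    coordReflection ε (coordReflection ε x) = x := by
  funext i
  simp only [coordReflection_apply]
  split_ifs <;> simp

lemma measurePreserving_coordReflection [Fintype ι] (ε : ι → Bool) :
    MeasurePreserving (coordReflection ε) := by
  have hrefl : ⇑(coordReflection ε) = fun x i => if ε i then x i else -x i :=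
    funext fun x => funext (coordReflection_apply ε x)
  rw [hrefl]
  refine volume_preserving_pi (α' := fun _ => ℝ) (β' := fun _ => ℝ)
    (f := fun i x => if ε i then x else -x) fun i => ?_
  by_cases h : ε i <;> simp only [h, if_true, if_false, Bool.false_eq_true]
  exacts [MeasurePreserving.id _, Measure.measurePreserving_neg _]

lemma abs_coordReflection_of_nonneg {x : ι → ℝ} (hx : 0 ≤ x) (ε : ι → Bool) (i : ι) :
    |coordReflection ε x i| = x i := by
  rw [coordReflection_apply]
  split_ifs <;> simp [abs_of_nonneg (hx i)]

lemma iUnion_preimage_coordReflection_Icc (a : ι → ℝ) :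
    ⋃ ε, coordReflection ε ⁻¹' Icc 0 a = Icc (-a) a := by
  ext x
  simp only [mem_iUnion, mem_preimage, mem_Icc, Pi.le_def, coordReflection_apply, Pi.neg_apply,
    Pi.zero_apply]
  constructor
  · rintro ⟨ε, h0, ha⟩
    refine ⟨fun i => ?_, fun i => ?_⟩ <;> have := h0 i <;> have := ha i <;>
      split_ifs at * <;> linarith
  · rintro ⟨hl, hu⟩
    refine ⟨fun i => decide (0 ≤ x i), fun i => ?_, fun i => ?_⟩ <;>
      by_cases h : 0 ≤ x i <;> simp only [h, decide_true, decide_false, if_true, if_false,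
        Bool.false_eq_true] <;> linarith [hl i, hu i]

lemma pairwise_aedisjoint_preimage_coordReflection_Icc [Fintype ι] (a : ι → ℝ) :
    Pairwise fun ε ε' : ι → Bool =>
      AEDisjoint volume (coordReflection ε ⁻¹' Icc 0 a) (coordReflection ε' ⁻¹' Icc 0 a) := by
  intro ε ε' hne
  obtain ⟨i, hi⟩ := Function.ne_iff.mp hne
  refine measure_mono_null (fun x ⟨hx, hx'⟩ => ?_) (Measure.pi_hyperplane _ i 0)
  have h := hx.1 i
  have h' := hx'.1 i
  simp only [Pi.zero_apply, coordReflection_apply] at h h'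
  show x i = 0
  cases hε : ε i <;> cases hε' : ε' i <;> simp only [hε, hε'] at hi h h' <;>
    first
      | exact absurd rfl hi
      | (simp only [Bool.false_eq_true, if_true, if_false] at h h'; linarith)

end Reflection

section Orthants

variable {ι E : Type*} [Fintype ι] [NormedAddCommGroup E] {a : ι → ℝ} {g : (ι → ℝ) → E}

lemma integrableOn_Icc_neg_of_comp_coordReflection
    (hg : ∀ ε, IntegrableOn (fun x => g (coordReflection ε x)) (Icc 0 a)) :
    IntegrableOn g (Icc (-a) a) := by
  rw [← iUnion_preimage_coordReflection_Icc, integrableOn_finite_iUnion]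
  intro ε
  have h := ((measurePreserving_coordReflection ε).integrableOn_comp_preimage
    (coordReflection ε).measurableEmbedding).2 (hg ε)
  simpa only [Function.comp_def, coordReflection_coordReflection] using h

lemma setIntegral_Icc_neg_eq_sum_coordReflection [DecidableEq ι] [NormedSpace ℝ E]
    (hg : IntegrableOn g (Icc (-a) a)) :
    ∫ x in Icc (-a) a, g x = ∑ ε, ∫ x in Icc 0 a, g (coordReflection ε x) := by
  rw [← iUnion_preimage_coordReflection_Icc] at hg ⊢
  rw [integral_iUnion_ae (fun ε => (measurableSet_Icc.preimage
      (coordReflection ε).measurable).nullMeasurableSet)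
    (pairwise_aedisjoint_preimage_coordReflection_Icc a) hg, tsum_fintype]
  refine Finset.sum_congr rfl fun ε _ => ?_
  have h := (measurePreserving_coordReflection ε).setIntegral_preimage_emb
    (coordReflection ε).measurableEmbedding (fun x => g (coordReflection ε x)) (Icc 0 a)
  simpa only [coordReflection_coordReflection] using h

end Orthants

open Complex in
lemma sum_exp_coordReflection {ι : Type*} [Fintype ι] [DecidableEq ι] (θ : ι → ℂ)
    (x : ι → ℝ) :
    ∑ ε, exp (-(I * π) * ∑ i, θ i * (coordReflection ε x i : ℂ)) =
      ∏ i, 2 * cos (π * θ i * x i) := by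
  set F : ι → Bool → ℂ := fun i b => exp (-(I * π) * θ i * if b then (x i : ℂ) else -x i)
  have hsplit : ∀ ε : ι → Bool,
      exp (-(I * π) * ∑ i, θ i * (coordReflection ε x i : ℂ)) = ∏ i, F i (ε i) := by
    intro ε
    simp only [F, Finset.mul_sum, exp_sum, coordReflection_apply, mul_assoc]
    refine Finset.prod_congr rfl fun i _ => ?_
    split_ifs <;> push_cast <;> rfl
  rw [Finset.sum_congr rfl fun ε _ => hsplit ε, ← Fintype.prod_sum F]
  refine Finset.prod_congr rfl fun i _ => ?_
  rw [Fintype.sum_bool, two_cos]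
  simp only [F, if_true, if_false, Bool.false_eq_true]
  ring_nf

lemma two_mul_cos_eq_rpow_mul_hpcFun (k : ℤ) (x : ℝ) :
    2 * Real.cos (π * k * x) =
      (2 : ℝ) ^ (if k = 0 then (1 : ℝ) else 1 / 2) * hpcFun k.natAbs x := by
  by_cases hk : k = 0
  · simp [hk, hpcFun]
  · have hcos : Real.cos (π * k.natAbs * x) = Real.cos (π * k * x) := by
      rw [Nat.cast_natAbs, Int.cast_abs]
      rcases abs_choice (k : ℝ) with h | h <;> rw [h]
      rw [mul_neg, neg_mul, Real.cos_neg]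
    rw [if_neg hk, hpcFun, if_neg (Int.natAbs_ne_zero.2 hk), hcos, ← mul_assoc,
      Real.sqrt_eq_rpow, ← Real.rpow_add two_pos]
    norm_num

lemma sum_ite_eq_zero_one_half (d : ℕ) (k : Fin d → ℤ) :
    ∑ i, (if k i = 0 then (1 : ℝ) else 1 / 2) = d - nzCount d k / 2 := by
  have hcard := Finset.card_filter_add_card_filter_not
    (s := (Finset.univ : Finset (Fin d))) (p := fun i => k i = 0)
  rw [Finset.card_univ, Fintype.card_fin] at hcard
  rw [Finset.sum_ite, Finset.sum_const, Finset.sum_const, nzCount]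
  simp only [nsmul_eq_mul, mul_one, ne_eq]
  rw [← Nat.cast_inj (R := ℝ), Nat.cast_add] at hcard
  rw [← hcard]
  ring

lemma rpow_mul_prod_two_mul_cos_eq_hpc (d : ℕ) (k : Fin d → ℤ) (x : Fin d → ℝ) :
    (2 : ℝ) ^ (((nzCount d k : ℝ) - d) / 2) * (2 : ℝ) ^ (-(d : ℝ) / 2) *
        ∏ i, 2 * Real.cos (π * k i * x i) =
      hpc d (fun i => (k i).natAbs) x := by
  simp only [two_mul_cos_eq_rpow_mul_hpcFun, Finset.prod_mul_distrib,
    ← Real.rpow_sum_of_pos two_pos, sum_ite_eq_zero_one_half, hpc, ← mul_assoc,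
    ← Real.rpow_add two_pos]
  have hexp : ((nzCount d k : ℝ) - d) / 2 + -(d : ℝ) / 2 + (d - nzCount d k / 2) = 0 := by ring
  rw [hexp, Real.rpow_zero, one_mul]

/-- For `f ∈ L¹([0,1]^d)` the half-period cosine coefficient of `f` at `|k̄|` and the
`k̄`-th Fourier coefficient of the periodization `𝒫f` are related by
`∫_{[0,1]^d} f c_{|k̄|} = 2^{(|k̄|₀-d)/2} · 2^{-d/2} ∫_{[-1,1]^d} 𝒫f(x) e^{-iπ k̄·x} dx`. -/
theorem statement4 (d : ℕ) (f : (Fin d → ℝ) → ℂ)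
    (hf : IntegrableOn f (Icc 0 1)) (k : Fin d → ℤ) :
    ∫ x in Icc (0 : Fin d → ℝ) 1, f x * (hpc d (fun i => (k i).natAbs) x : ℂ) =
      (((2 : ℝ) ^ (((nzCount d k : ℝ) - d) / 2) * (2 : ℝ) ^ (-(d : ℝ) / 2) : ℝ) : ℂ) *
        ∫ x in Icc (-1 : Fin d → ℝ) 1,
          f (fun i => |x i|) *
            Complex.exp (-(Complex.I * (Real.pi : ℂ)) * ∑ i, (k i : ℂ) * (x i : ℂ)) := by
  set e : (Fin d → ℝ) → ℂ :=
    fun y => Complex.exp (-(Complex.I * π) * ∑ i, (k i : ℂ) * (y i : ℂ)) with he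
  have he_meas : Measurable e := by fun_prop
  have he_norm : ∀ y, ‖e y‖ = 1 := fun y => by
    simp [he, Complex.norm_exp]
  have hint : ∀ ε, IntegrableOn (fun x => f x * e (coordReflection ε x)) (Icc 0 1) := fun ε =>
    hf.mul_bdd (he_meas.comp (coordReflection ε).measurable).aestronglyMeasurable
      (ae_of_all _ fun x => (he_norm _).le)
  have hfold : ∀ ε, EqOn (fun x => f (fun i => |coordReflection ε x i|) * e (coordReflection ε x))
      (fun x => f x * e (coordReflection ε x)) (Icc 0 1) := fun ε x hx => by
    simp only [abs_coordReflection_of_nonneg hx.1]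
  rw [setIntegral_Icc_neg_eq_sum_coordReflection (integrableOn_Icc_neg_of_comp_coordReflection
      fun ε => (hint ε).congr_fun (hfold ε).symm measurableSet_Icc),
    Finset.sum_congr rfl fun ε _ => setIntegral_congr_fun measurableSet_Icc (hfold ε),
    ← integral_finsetSum _ fun ε _ => hint ε, ← integral_const_mul]
  refine setIntegral_congr_fun measurableSet_Icc fun x _ => ?_
  simp only [← Finset.mul_sum, he, sum_exp_coordReflection, ← rpow_mul_prod_two_mul_cos_eq_hpc]
  push_cast
  ring
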